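/- arXiv:1309.1219 — 2 statements merged into one kernel-verified Lean document; each statement's English description precedes it below -/
import Mathlib

section
/- Let K, K' be Hilbert spaces and U : K → K' a unitary (or more generally invertible bounded) operator. Then {x_i, V_i}_{i∈I} is a frame of subspaces for K if and only if {x_i, U V_i}_{i∈I} is a frame of subspaces for K'. -/
/-! Since `P_{U V} = U P_V U⁻¹`, the frame sum at `k'` equals the frame sum at `U⁻¹ k'`;
as `U` also preserves norms, the two frame inequalities are the same statement read
through the bijection `U`. -/

section

variable {𝕜 : Type*} [RCLike 𝕜] {E E' : Type*} [NormedAddCommGroup E] [InnerProductSpace 𝕜 E]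
  [NormedAddCommGroup E'] [InnerProductSpace 𝕜 E']

theorem LinearIsometryEquiv.norm_orthogonalProjectionOnto_map (U : E ≃ₗᵢ[𝕜] E')
    (V : Submodule 𝕜 E) [CompleteSpace V] [CompleteSpace (V.map U.toLinearEquiv.toLinearMap)]
    (y : E') :
    ‖(Submodule.orthogonalProjectionOnto (V.map U.toLinearEquiv.toLinearMap) y : E')‖ =
      ‖(Submodule.orthogonalProjectionOnto V (U.symm y) : E)‖ := by
  rw [← Submodule.starProjection_apply, ← Submodule.starProjection_apply,
    Submodule.starProjection_map_apply U V y, U.norm_map]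

theorem Equiv.exists_quadratic_bounds_iff {α β : Type*} [Norm α] [Norm β] (e : α ≃ β)
    (he : ∀ a, ‖e a‖ = ‖a‖) (f : α → ℝ) (g : β → ℝ) (hfg : ∀ a, g (e a) = f a) :
    (∃ A B : ℝ, 0 < A ∧ 0 < B ∧ ∀ a, A * ‖a‖ ^ 2 ≤ f a ∧ f a ≤ B * ‖a‖ ^ 2) ↔
      (∃ A B : ℝ, 0 < A ∧ 0 < B ∧ ∀ b, A * ‖b‖ ^ 2 ≤ g b ∧ g b ≤ B * ‖b‖ ^ 2) := by
  refine exists₂_congr fun A B => and_congr_right' <| and_congr_right' ?_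
  rw [← e.forall_congr_right]
  simp only [he, hfg]

end

theorem frame_of_subspaces_iff_unitary_image_general
    {K K' : Type*} [NormedAddCommGroup K] [InnerProductSpace ℂ K]
    [NormedAddCommGroup K'] [InnerProductSpace ℂ K']
    {I : Type*} (U : K ≃ₗᵢ[ℂ] K')
    (V : I → Submodule ℂ K) [∀ i, CompleteSpace (V i)]
    [∀ i, CompleteSpace ((V i).map U.toLinearEquiv.toLinearMap)]
    (x : I → ℝ) :
    (∃ A B : ℝ, 0 < A ∧ 0 < B ∧ ∀ k : K,
        A * ‖k‖ ^ 2 ≤ (∑' i, (x i) ^ 2 * ‖(Submodule.orthogonalProjectionOnto (V i) k : K)‖ ^ 2) ∧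
        (∑' i, (x i) ^ 2 * ‖(Submodule.orthogonalProjectionOnto (V i) k : K)‖ ^ 2) ≤ B * ‖k‖ ^ 2)
    ↔ (∃ A B : ℝ, 0 < A ∧ 0 < B ∧ ∀ k' : K',
        A * ‖k'‖ ^ 2 ≤
          (∑' i, (x i) ^ 2 *
            ‖(Submodule.orthogonalProjectionOnto ((V i).map U.toLinearEquiv.toLinearMap) k' : K')‖ ^ 2) ∧
        (∑' i, (x i) ^ 2 *
            ‖(Submodule.orthogonalProjectionOnto ((V i).map U.toLinearEquiv.toLinearMap) k' : K')‖ ^ 2)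
          ≤ B * ‖k'‖ ^ 2) :=
  U.toEquiv.exists_quadratic_bounds_iff U.norm_map _ _ fun k => by
    simp only [U.norm_orthogonalProjectionOnto_map, LinearEquiv.coe_toEquiv,
      LinearIsometryEquiv.coe_toLinearEquiv, LinearIsometryEquiv.symm_apply_apply]

/-- For a unitary `U : K → K'`, `{x_i, V_i}` is a frame of subspaces
for `K` iff `{x_i, U V_i}` is a frame of subspaces for `K'`. -/
theorem frame_of_subspaces_iff_unitary_image
    {K K' : Type*} [NormedAddCommGroup K] [InnerProductSpace ℂ K] [CompleteSpace K]
    [NormedAddCommGroup K'] [InnerProductSpace ℂ K'] [CompleteSpace K']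
    {I : Type*} (U : K ≃ₗᵢ[ℂ] K')
    (V : I → Submodule ℂ K) [∀ i, CompleteSpace (V i)]
    [∀ i, CompleteSpace ((V i).map U.toLinearEquiv.toLinearMap)]
    (x : I → ℝ) (hx_pos : ∀ i, 0 < x i) (hx_bdd : ∃ M : ℝ, ∀ i, x i ≤ M) :
    (∃ A B : ℝ, 0 < A ∧ 0 < B ∧ ∀ k : K,
        A * ‖k‖ ^ 2 ≤ (∑' i, (x i) ^ 2 * ‖(Submodule.orthogonalProjectionOnto (V i) k : K)‖ ^ 2) ∧
        (∑' i, (x i) ^ 2 * ‖(Submodule.orthogonalProjectionOnto (V i) k : K)‖ ^ 2) ≤ B * ‖k‖ ^ 2)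
    ↔ (∃ A B : ℝ, 0 < A ∧ 0 < B ∧ ∀ k' : K',
        A * ‖k'‖ ^ 2 ≤
          (∑' i, (x i) ^ 2 *
            ‖(Submodule.orthogonalProjectionOnto ((V i).map U.toLinearEquiv.toLinearMap) k' : K')‖ ^ 2) ∧
        (∑' i, (x i) ^ 2 *
            ‖(Submodule.orthogonalProjectionOnto ((V i).map U.toLinearEquiv.toLinearMap) k' : K')‖ ^ 2)
          ≤ B * ‖k'‖ ^ 2) :=
  frame_of_subspaces_iff_unitary_image_general U V x
end

section
/- Let K be a Hilbert space, I an index set, {J_i}_{i∈I} a partition of a set of indices, and for each i let {k_{i,j}}_{j∈J_i} be a frame for the closed subspace V_i = closure of span{k_{i,j} : j ∈ J_i} with frame bounds A_i, B_i satisfying 0 < A = inf_i A_i and B = sup_i B_i < ∞. Fix weights (x_i) ∈ ℓ^∞₊(I). Then {x_i k_{i,j}}_{i∈I, j∈J_i} is a frame for K if and only if {x_i, V_i}_{i∈I} is a frame of subspaces for K. -/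
/-!
Every `k i j` lies in `V i`, so `⟪f, k i j⟫ = ⟪P_{V i} f, k i j⟫`. Applying the local frame
inequalities to `P_{V i} f` and multiplying by `x i ^ 2` bounds the block `i` of the frame sum
between `A` and `B` times `x i ^ 2 * ‖P_{V i} f‖ ^ 2`. Summing over `i` shows that the two
quadratic forms `f ↦ ∑ |⟪f, x_i k_{i,j}⟫|²` and `f ↦ ∑ x_i² ‖P_{V_i} f‖²` are within constant
factors of each other, so one has frame bounds iff the other does.
-/

open scoped InnerProductSpace

section Summation

variable {ι : Type*}

theorem summable_iff_of_mul_le_of_le_mul {f g : ι → ℝ} {a b : ℝ} (ha : 0 < a) (hg : 0 ≤ g)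
    (hlow : ∀ i, a * g i ≤ f i) (hup : ∀ i, f i ≤ b * g i) : Summable f ↔ Summable g := by
  have hf : 0 ≤ f := fun i => (mul_nonneg ha.le (hg i)).trans (hlow i)
  refine ⟨fun hsf => (hsf.mul_left a⁻¹).of_nonneg_of_le hg fun i => ?_,
    fun hsg => (hsg.mul_left b).of_nonneg_of_le hf hup⟩
  rw [le_inv_mul_iff₀ ha]
  exact hlow i

/-- No summability hypothesis is needed: either both series are summable or both `tsum`s are
the junk value `0`. -/
theorem tsum_bounds_of_mul_le_of_le_mul {f g : ι → ℝ} {a b : ℝ} (ha : 0 < a) (hg : 0 ≤ g)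
    (hlow : ∀ i, a * g i ≤ f i) (hup : ∀ i, f i ≤ b * g i) :
    a * ∑' i, g i ≤ ∑' i, f i ∧ ∑' i, f i ≤ b * ∑' i, g i := by
  by_cases hsg : Summable g
  · have hsf := (summable_iff_of_mul_le_of_le_mul ha hg hlow hup).2 hsg
    rw [← tsum_mul_left, ← tsum_mul_left]
    exact ⟨(hsg.mul_left a).tsum_le_tsum hlow hsf, hsf.tsum_le_tsum hup (hsg.mul_left b)⟩
  · have hsf : ¬Summable f := mt (summable_iff_of_mul_le_of_le_mul ha hg hlow hup).1 hsg
    simp [tsum_eq_zero_of_not_summable hsg, tsum_eq_zero_of_not_summable hsf]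

theorem tsum_sigma_of_nonneg {κ : ι → Type*} {φ : (Σ i, κ i) → ℝ} (hφ : 0 ≤ φ)
    (hfib : ∀ i, Summable fun j => φ ⟨i, j⟩) : ∑' p, φ p = ∑' i, ∑' j, φ ⟨i, j⟩ := by
  by_cases hs : Summable φ
  · exact hs.tsum_sigma' hfib
  · have hs' : ¬Summable fun i => ∑' j, φ ⟨i, j⟩ :=
      fun h => hs ((summable_sigma_of_nonneg hφ).2 ⟨hfib, h⟩)
    rw [tsum_eq_zero_of_not_summable hs, tsum_eq_zero_of_not_summable hs']

end Summation

theorem exists_bounds_iff_of_mul_le_of_le_mul {α : Type*} {q S T : α → ℝ} {a b : ℝ}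
    (ha : 0 < a) (hb : 0 < b) (h : ∀ f, a * T f ≤ S f ∧ S f ≤ b * T f) :
    (∃ C D : ℝ, 0 < C ∧ 0 < D ∧ ∀ f, C * q f ≤ S f ∧ S f ≤ D * q f) ↔
      (∃ C D : ℝ, 0 < C ∧ 0 < D ∧ ∀ f, C * q f ≤ T f ∧ T f ≤ D * q f) := by
  constructor
  · rintro ⟨C, D, hC, hD, hS⟩
    refine ⟨C / b, D / a, div_pos hC hb, div_pos hD ha, fun f => ⟨?_, ?_⟩⟩
    · rw [div_mul_eq_mul_div, div_le_iff₀ hb, mul_comm (T f)]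
      exact (hS f).1.trans (h f).2
    · rw [div_mul_eq_mul_div, le_div_iff₀ ha, mul_comm (T f)]
      exact (h f).1.trans (hS f).2
  · rintro ⟨C, D, hC, hD, hT⟩
    refine ⟨a * C, b * D, mul_pos ha hC, mul_pos hb hD, fun f => ⟨?_, ?_⟩⟩
    · rw [mul_assoc]
      exact (mul_le_mul_of_nonneg_left (hT f).1 ha.le).trans (h f).1
    · rw [mul_assoc]
      exact (h f).2.trans (mul_le_mul_of_nonneg_left (hT f).2 hb.le)

section Frames

variable {𝕜 E : Type*} [RCLike 𝕜] [NormedAddCommGroup E] [InnerProductSpace 𝕜 E]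

theorem summable_norm_inner_sq_of_mul_norm_sq_le {J : Type*} (e : J → E) {A : ℝ} (hA : 0 < A)
    {v : E} (hv : A * ‖v‖ ^ 2 ≤ ∑' j, ‖⟪v, e j⟫_𝕜‖ ^ 2) :
    Summable fun j => ‖⟪v, e j⟫_𝕜‖ ^ 2 := by
  by_contra hs
  rw [tsum_eq_zero_of_not_summable hs] at hv
  have hv0 : v = 0 := by simpa using nonpos_of_mul_nonpos_right hv hA
  simp [hv0] at hs

theorem norm_inner_smul_sq_eq (f u : E) (c : ℝ) :
    ‖⟪f, (c : 𝕜) • u⟫_𝕜‖ ^ 2 = c ^ 2 * ‖⟪f, u⟫_𝕜‖ ^ 2 := by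
  rw [inner_smul_right, norm_mul, mul_pow, RCLike.norm_ofReal, sq_abs]

theorem tsum_norm_inner_smul_sq_bounds {J : Type*} (e : J → E) (V : Submodule 𝕜 E)
    [V.HasOrthogonalProjection] (he : ∀ j, e j ∈ V) (c : ℝ) {A B : ℝ} (hA : 0 < A)
    (hlocal : ∀ v ∈ V, A * ‖v‖ ^ 2 ≤ (∑' j, ‖⟪v, e j⟫_𝕜‖ ^ 2) ∧
      (∑' j, ‖⟪v, e j⟫_𝕜‖ ^ 2) ≤ B * ‖v‖ ^ 2) (f : E) :
    Summable (fun j => ‖⟪f, (c : 𝕜) • e j⟫_𝕜‖ ^ 2) ∧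
      A * (c ^ 2 * ‖(V.orthogonalProjectionOnto f : E)‖ ^ 2) ≤
        ∑' j, ‖⟪f, (c : 𝕜) • e j⟫_𝕜‖ ^ 2 ∧
      ∑' j, ‖⟪f, (c : 𝕜) • e j⟫_𝕜‖ ^ 2 ≤
        B * (c ^ 2 * ‖(V.orthogonalProjectionOnto f : E)‖ ^ 2) := by
  have hproj : ∀ j, ⟪f, (c : 𝕜) • e j⟫_𝕜 =
      ⟪(V.orthogonalProjectionOnto f : E), (c : 𝕜) • e j⟫_𝕜 :=
    fun j => (V.inner_orthogonalProjectionOnto_eq_of_mem_right ⟨_, V.smul_mem _ (he j)⟩ f).symm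
  obtain ⟨hlow, hup⟩ := hlocal _ (V.orthogonalProjectionOnto f).2
  simp only [hproj, norm_inner_smul_sq_eq, tsum_mul_left]
  refine ⟨(summable_norm_inner_sq_of_mul_norm_sq_le e hA hlow).mul_left _, ?_, ?_⟩
  · rw [mul_left_comm]
    exact mul_le_mul_of_nonneg_left hlow (sq_nonneg c)
  · rw [mul_left_comm B]
    exact mul_le_mul_of_nonneg_left hup (sq_nonneg c)

end Frames

theorem frame_iff_frame_of_subspaces_general
    {K : Type*} [NormedAddCommGroup K] [InnerProductSpace ℂ K]
    {I : Type*} {Jd : I → Type*}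
    (k : ∀ i, Jd i → K)
    (V : I → Submodule ℂ K) [∀ i, CompleteSpace (V i)]
    (hV : ∀ i, V i = (Submodule.span ℂ (Set.range (k i))).topologicalClosure)
    (x : I → ℝ)
    (A B : ℝ) (hA : 0 < A) (hAB : A ≤ B)
    (hlocal : ∀ i, ∀ v ∈ V i,
      A * ‖v‖ ^ 2 ≤ (∑' j, ‖(inner ℂ v (k i j) : ℂ)‖ ^ 2) ∧
      (∑' j, ‖(inner ℂ v (k i j) : ℂ)‖ ^ 2) ≤ B * ‖v‖ ^ 2) :
    (∃ C D : ℝ, 0 < C ∧ 0 < D ∧ ∀ f : K,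
        C * ‖f‖ ^ 2 ≤
          (∑' p : Σ i, Jd i, ‖(inner ℂ f (((x p.1 : ℂ)) • k p.1 p.2) : ℂ)‖ ^ 2) ∧
        (∑' p : Σ i, Jd i, ‖(inner ℂ f (((x p.1 : ℂ)) • k p.1 p.2) : ℂ)‖ ^ 2)
          ≤ D * ‖f‖ ^ 2)
    ↔ (∃ C D : ℝ, 0 < C ∧ 0 < D ∧ ∀ f : K,
        C * ‖f‖ ^ 2 ≤ (∑' i, (x i) ^ 2 * ‖((V i).orthogonalProjection f : K)‖ ^ 2) ∧
        (∑' i, (x i) ^ 2 * ‖((V i).orthogonalProjection f : K)‖ ^ 2) ≤ D * ‖f‖ ^ 2) := by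
  have hk : ∀ i j, k i j ∈ V i := fun i j =>
    hV i ▸ Submodule.le_topologicalClosure _ (Submodule.subset_span ⟨j, rfl⟩)
  refine exists_bounds_iff_of_mul_le_of_le_mul hA (hA.trans_le hAB) fun f => ?_
  have hblock i := tsum_norm_inner_smul_sq_bounds (k i) (V i) (hk i) (x i) hA (hlocal i) f
  rw [tsum_sigma_of_nonneg (fun _ => sq_nonneg _) fun i => ?_]
  · exact tsum_bounds_of_mul_le_of_le_mul hA (fun i => by positivity)
      (fun i => (hblock i).2.1) fun i => (hblock i).2.2
  · exact (hblock i).1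

/-- Given a partition `I = ⊔ J_i` and, for each `i`, a frame
`{k_{i,j}}_{j ∈ J_i}` for the closed subspace `V_i = closure (span {k_{i,j}})` with
uniform frame bounds `0 < A ≤ B`, and weights `(x_i) ∈ ℓ^∞₊(I)`:
`{x_i k_{i,j}}_{i,j}` is a frame for `K` iff `{x_i, V_i}` is a frame of subspaces
for `K`. -/
theorem frame_iff_frame_of_subspaces
    {K : Type*} [NormedAddCommGroup K] [InnerProductSpace ℂ K] [CompleteSpace K]
    {I : Type*} {Jd : I → Type*}
    (k : ∀ i, Jd i → K)
    (V : I → Submodule ℂ K) [∀ i, CompleteSpace (V i)]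
    (hV : ∀ i, V i = (Submodule.span ℂ (Set.range (k i))).topologicalClosure)
    (x : I → ℝ) (hx_pos : ∀ i, 0 < x i) (hx_bdd : ∃ M : ℝ, ∀ i, x i ≤ M)
    (A B : ℝ) (hA : 0 < A) (hAB : A ≤ B)
    (hlocal : ∀ i, ∀ v ∈ V i,
      A * ‖v‖ ^ 2 ≤ (∑' j, ‖(inner ℂ v (k i j) : ℂ)‖ ^ 2) ∧
      (∑' j, ‖(inner ℂ v (k i j) : ℂ)‖ ^ 2) ≤ B * ‖v‖ ^ 2) :
    (∃ C D : ℝ, 0 < C ∧ 0 < D ∧ ∀ f : K,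
        C * ‖f‖ ^ 2 ≤
          (∑' p : Σ i, Jd i, ‖(inner ℂ f (((x p.1 : ℂ)) • k p.1 p.2) : ℂ)‖ ^ 2) ∧
        (∑' p : Σ i, Jd i, ‖(inner ℂ f (((x p.1 : ℂ)) • k p.1 p.2) : ℂ)‖ ^ 2)
          ≤ D * ‖f‖ ^ 2)
    ↔ (∃ C D : ℝ, 0 < C ∧ 0 < D ∧ ∀ f : K,
        C * ‖f‖ ^ 2 ≤ (∑' i, (x i) ^ 2 * ‖((V i).orthogonalProjection f : K)‖ ^ 2) ∧
        (∑' i, (x i) ^ 2 * ‖((V i).orthogonalProjection f : K)‖ ^ 2) ≤ D * ‖f‖ ^ 2) :=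
  frame_iff_frame_of_subspaces_general k V hV x A B hA hAB hlocal
end
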